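/- arXiv:1803.00709 — 5 statements merged into one kernel-verified Lean document; each statement's English description precedes it below -/
import Mathlib

section
/- Let Q be a commutative nontrivial ZDF involutive quantale and X a nonempty set. Then there exists a global section of the Gelfand spectrum over X; that is, the object X of the category of Q-valued relations is Kochen–Specker non-contextual. -/
open Classical

noncomputable section

universe u v

/-- A commutative involutive quantale: a complete lattice with a commutative
monoid operation distributing over arbitrary joins, together with a
join-preserving involution compatible with multiplication and unit. -/
structure CommInvQuantale (Q : Type u) [CompleteLattice Q] : Type u where
  mul : Q → Q → Q
  one : Q
  mul_comm : ∀ a b : Q, mul a b = mul b a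
  mul_assoc : ∀ a b c : Q, mul (mul a b) c = mul a (mul b c)
  one_mul : ∀ a : Q, mul one a = a
  mul_sSup : ∀ (a : Q) (S : Set Q), mul a (sSup S) = ⨆ y ∈ S, mul a y
  inv : Q → Q
  inv_inv : ∀ a : Q, inv (inv a) = a
  inv_sSup : ∀ S : Set Q, inv (sSup S) = ⨆ y ∈ S, inv y
  inv_mul : ∀ a b : Q, inv (mul a b) = mul (inv a) (inv b)
  inv_one : inv one = one

namespace CommInvQuantale

variable {Q : Type u} [CompleteLattice Q] {X : Type v}

/-- Zero-divisor free: `x·y = 0` implies `x = 0` or `y = 0` (where `0 = ⊥`). -/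
def ZDF (Qd : CommInvQuantale Q) : Prop :=
  ∀ a b : Q, Qd.mul a b = ⊥ → a = ⊥ ∨ b = ⊥

/-- Nontrivial: `1 ≠ 0`. -/
def NontrivialQ (Qd : CommInvQuantale Q) : Prop := Qd.one ≠ (⊥ : Q)

/-- The zero `Q`-relation. -/
def qzero : X → X → Q := fun _ _ => (⊥ : Q)

/-- The support of a `Q`-relation. -/
def supp (f : X → X → Q) : Set X := {x | ∃ y, f x y ≠ (⊥ : Q)}

/-- The cosupport of a `Q`-relation. -/
def cosupp (f : X → X → Q) : Set X := {x | ∃ y, f y x ≠ (⊥ : Q)}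

/-- The kernel of a character of `A`. -/
def kerChar (A : Set (X → X → Q)) (ρ : (X → X → Q) → Q) : Set (X → X → Q) :=
  {f ∈ A | ρ f = (⊥ : Q)}

/-- The map `w : Q → 2` sending `0` to `0` and every nonzero element to `1`
(with `2` modelled by `Bool`). -/
def wmap : Q → Bool := fun q => if q = (⊥ : Q) then false else true

/-- The kernel of a homomorphism `γ : A → 2` (with `2` modelled by `Bool`). -/
def kerTwo (A : Set (X → X → Q)) (γ : (X → X → Q) → Bool) : Set (X → X → Q) :=
  {f ∈ A | γ f = false}

variable (Qd : CommInvQuantale Q)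

/-- Composition of `Q`-relations: `(f ∘ g)(x,z) = ⋁_y g(x,y) · f(y,z)`,
so `qcomp Qd f g` is "`f` after `g`". -/
def qcomp (f g : X → X → Q) : X → X → Q := fun x z => ⨆ y : X, Qd.mul (g x y) (f y z)

/-- The identity `Q`-relation. -/
def qid : X → X → Q := fun x y => if x = y then Qd.one else ⊥

/-- The dagger of a `Q`-relation: `f†(x,y) = f(y,x)*`. -/
def qdag (f : X → X → Q) : X → X → Q := fun x y => Qd.inv (f y x)

/-- Scalar multiplication of a `Q`-relation: `(q•f)(x,y) = q·f(x,y)`. -/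
def qsmul (q : Q) (f : X → X → Q) : X → X → Q := fun x y => Qd.mul q (f x y)

/-- A commutative unital *-subsemialgebra of `Hom(X,X)`: contains the zero and
identity relations, closed under pointwise binary join, composition, scalar
multiplication and dagger, and composition is commutative on it. -/
structure IsSubalg (A : Set (X → X → Q)) : Prop where
  zero_mem : qzero ∈ A
  id_mem : Qd.qid ∈ A
  sup_mem : ∀ f ∈ A, ∀ g ∈ A, f ⊔ g ∈ A
  comp_mem : ∀ f ∈ A, ∀ g ∈ A, Qd.qcomp f g ∈ A
  smul_mem : ∀ (q : Q), ∀ f ∈ A, Qd.qsmul q f ∈ A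
  dag_mem : ∀ f ∈ A, Qd.qdag f ∈ A
  comp_comm : ∀ f ∈ A, ∀ g ∈ A, Qd.qcomp f g = Qd.qcomp g f

/-- The commutant of a set of `Q`-relations. -/
def commutant (B : Set (X → X → Q)) : Set (X → X → Q) :=
  { f | ∀ g ∈ B, Qd.qcomp f g = Qd.qcomp g f }

/-- A commutative von Neumann unital *-subsemialgebra: a commutative unital
*-subsemialgebra equal to its double commutant. -/
def IsVN (A : Set (X → X → Q)) : Prop :=
  Qd.IsSubalg A ∧ Qd.commutant (Qd.commutant A) = A

/-- A character of `A`: a map `ρ : Hom(X,X) → Q` with `ρ(0) = 0`, `ρ(id) = 1`,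
preserving binary joins, composition and dagger on `A`. -/
structure IsChar (A : Set (X → X → Q)) (ρ : (X → X → Q) → Q) : Prop where
  map_zero : ρ qzero = (⊥ : Q)
  map_id : ρ Qd.qid = Qd.one
  map_sup : ∀ f ∈ A, ∀ g ∈ A, ρ (f ⊔ g) = ρ f ⊔ ρ g
  map_comp : ∀ f ∈ A, ∀ g ∈ A, ρ (Qd.qcomp f g) = Qd.mul (ρ f) (ρ g)
  map_dag : ∀ f ∈ A, ρ (Qd.qdag f) = Qd.inv (ρ f)

/-- An ideal of `A`. -/
structure IsIdeal (A J : Set (X → X → Q)) : Prop where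
  subset : J ⊆ A
  zero_mem : qzero ∈ J
  sup_mem : ∀ a ∈ J, ∀ b ∈ J, a ⊔ b ∈ J
  absorb : ∀ f ∈ A, ∀ a ∈ J, Qd.qcomp f a ∈ J

/-- A prime k*-ideal of `A`: a proper prime ideal which is a k-ideal closed
under dagger. -/
structure IsPrimeKStarIdeal (A J : Set (X → X → Q)) : Prop where
  ideal : Qd.IsIdeal A J
  proper : J ≠ A
  prime : ∀ f ∈ A, ∀ g ∈ A, Qd.qcomp f g ∈ J → f ∈ J ∨ g ∈ J
  kideal : ∀ a ∈ J, ∀ b ∈ A, a ⊔ b ∈ J → b ∈ J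
  dag_mem : ∀ a ∈ J, Qd.qdag a ∈ J

/-- A global section of the Gelfand spectrum over `X`: an assignment of a
character to every commutative von Neumann unital *-subsemialgebra of
`Hom(X,X)`, compatible with restriction along inclusions. -/
def IsGelfandGlobalSection (ρ : Set (X → X → Q) → (X → X → Q) → Q) : Prop :=
  (∀ A : Set (X → X → Q), Qd.IsVN A → Qd.IsChar A (ρ A)) ∧
  (∀ A B : Set (X → X → Q), Qd.IsVN A → Qd.IsVN B → A ⊆ B → ∀ f ∈ A, ρ A f = ρ B f)

/-- A global section of the prime spectrum over `X`: an assignment of a prime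
k*-ideal to every commutative von Neumann unital *-subsemialgebra of
`Hom(X,X)`, compatible with restriction along inclusions. -/
def IsPrimeGlobalSection (χ : Set (X → X → Q) → Set (X → X → Q)) : Prop :=
  (∀ A : Set (X → X → Q), Qd.IsVN A → Qd.IsPrimeKStarIdeal A (χ A)) ∧
  (∀ A B : Set (X → X → Q), Qd.IsVN A → Qd.IsVN B → A ⊆ B → χ A = A ∩ χ B)

/-- An idempotent element of `A`. -/
def IsIdem (A : Set (X → X → Q)) (p : X → X → Q) : Prop :=
  p ∈ A ∧ Qd.qcomp p p = p

/-- A subunital idempotent of `A`: an idempotent with an orthogonal idempotent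
complement summing to the identity. -/
def IsSubunital (A : Set (X → X → Q)) (p : X → X → Q) : Prop :=
  Qd.IsIdem A p ∧ ∃ q, Qd.IsIdem A q ∧ Qd.qcomp p q = qzero ∧ p ⊔ q = Qd.qid

/-- A primitive subunital idempotent of `A`. -/
def IsPrimitive (A : Set (X → X → Q)) (p : X → X → Q) : Prop :=
  Qd.IsSubunital A p ∧ p ≠ qzero ∧
    ¬ ∃ s t, Qd.IsSubunital A s ∧ s ≠ qzero ∧ Qd.IsSubunital A t ∧ t ≠ qzero ∧
      Qd.qcomp s t = qzero ∧ s ⊔ t = p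

/-- The unique quantale map `! : 2 → Q` (with `2` modelled by `Bool`). -/
def bang : Bool → Q := fun b => if b then Qd.one else ⊥

/-- A homomorphism `γ : A → 2` (with `2` the two-element quantale, modelled by
`Bool` with join `||` and multiplication `&&`, trivial involution). -/
structure IsTwoHom (A : Set (X → X → Q)) (γ : (X → X → Q) → Bool) : Prop where
  map_zero : γ qzero = false
  map_id : γ Qd.qid = true
  map_sup : ∀ f ∈ A, ∀ g ∈ A, γ (f ⊔ g) = (γ f || γ g)
  map_comp : ∀ f ∈ A, ∀ g ∈ A, γ (Qd.qcomp f g) = (γ f && γ g)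
  map_dag : ∀ f ∈ A, γ (Qd.qdag f) = γ f

/-- The Gelfand spectrum of `A`: the set of characters of `A`. -/
def SpecG (A : Set (X → X → Q)) : Type (max u v) :=
  {ρ : (X → X → Q) → Q // Qd.IsChar A ρ}

/-- The prime spectrum of `A`: the set of prime k*-ideals of `A`. -/
def SpecP (A : Set (X → X → Q)) : Type (max u v) :=
  {J : Set (X → X → Q) // Qd.IsPrimeKStarIdeal A J}

/-- The Zariski topology on the Gelfand spectrum, with basic closed sets
`V_G(J) = {ρ | J ⊆ ker ρ}` for ideals `J` of `A`. -/
def zariskiG (A : Set (X → X → Q)) : TopologicalSpace (Qd.SpecG A) :=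
  TopologicalSpace.generateFrom
    {U | ∃ J : Set (X → X → Q), Qd.IsIdeal A J ∧
      U = {ρ : Qd.SpecG A | J ⊆ kerChar A ρ.1}ᶜ}

/-- The Zariski topology on the prime spectrum, with basic closed sets
`V_P(J) = {K | J ⊆ K}` for ideals `J` of `A`. -/
def zariskiP (A : Set (X → X → Q)) : TopologicalSpace (Qd.SpecP A) :=
  TopologicalSpace.generateFrom
    {U | ∃ J : Set (X → X → Q), Qd.IsIdeal A J ∧
      U = {K : Qd.SpecP A | J ⊆ K.1}ᶜ}

/-! Fix `x₀ : X`. As `Q` has no zero divisors, `f ↦ [x₀ ∈ supp f]` ("row `x₀` of `f` is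
nonzero") is a homomorphism into `2` on every commutative *-subsemialgebra `A`. The row `x₀`
of a composite is nonzero only if that of the factor applied first is, and commutativity lets
any factor be applied first: `f ∘ f† = f† ∘ f` relates the rows of `f` and `f†`, and
`f ∘ (g† ∘ g) = g† ∘ (f ∘ g)` shows that `f ∘ g` has a nonzero row `x₀` when `f` and `g` do.
Composing with `2 → Q` gives a character of `A` that does not depend on `A`, so these
characters are compatible with restriction. -/

theorem mul_bot (a : Q) : Qd.mul a ⊥ = ⊥ := by
  simpa using Qd.mul_sSup a ∅

theorem bot_mul (a : Q) : Qd.mul ⊥ a = ⊥ := by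
  rw [Qd.mul_comm, Qd.mul_bot]

theorem mul_iSup {ι : Sort*} (a : Q) (f : ι → Q) :
    Qd.mul a (⨆ i, f i) = ⨆ i, Qd.mul a (f i) := by
  rw [← sSup_range, Qd.mul_sSup, iSup_range]

theorem iSup_mul {ι : Sort*} (f : ι → Q) (a : Q) :
    Qd.mul (⨆ i, f i) a = ⨆ i, Qd.mul (f i) a := by
  simp only [Qd.mul_comm _ a, Qd.mul_iSup]

theorem inv_bot : Qd.inv (⊥ : Q) = ⊥ := by
  simpa using Qd.inv_sSup ∅

theorem inv_eq_bot_iff {a : Q} : Qd.inv a = ⊥ ↔ a = ⊥ := by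
  refine ⟨fun h => ?_, fun h => h ▸ Qd.inv_bot⟩
  rw [← Qd.inv_inv a, h, Qd.inv_bot]

variable {Qd} in
theorem ZDF.mul_ne_bot (hZDF : Qd.ZDF) {a b : Q} (ha : a ≠ ⊥)
    (hb : b ≠ ⊥) : Qd.mul a b ≠ ⊥ :=
  fun h => (hZDF a b h).elim ha hb

theorem qcomp_assoc (f g h : X → X → Q) :
    Qd.qcomp (Qd.qcomp f g) h = Qd.qcomp f (Qd.qcomp g h) := by
  funext x z
  simp only [qcomp, Qd.mul_iSup, Qd.iSup_mul, Qd.mul_assoc]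
  exact iSup_comm

theorem qdag_ne_bot_iff {f : X → X → Q} {x y : X} : Qd.qdag f x y ≠ ⊥ ↔ f y x ≠ ⊥ :=
  Qd.inv_eq_bot_iff.not

theorem mem_supp_sup_iff {f g : X → X → Q} {x : X} :
    x ∈ supp (f ⊔ g) ↔ x ∈ supp f ∨ x ∈ supp g := by
  simp only [supp, Set.mem_ofPred_eq, Pi.sup_apply, ne_eq, sup_eq_bot_iff, not_and_or,
    exists_or]

theorem mem_supp_of_mem_supp_qcomp {f g : X → X → Q} {x : X}
    (h : x ∈ supp (Qd.qcomp f g)) : x ∈ supp g := by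
  obtain ⟨z, hz⟩ := h
  obtain ⟨y, hy⟩ : ∃ y, Qd.mul (g x y) (f y z) ≠ ⊥ := by
    by_contra! h
    exact hz (iSup_eq_bot.mpr h)
  exact ⟨y, fun hg => hy (by rw [hg, Qd.bot_mul])⟩

variable {Qd} in
theorem qcomp_ne_bot (hZDF : Qd.ZDF) {f g : X → X → Q} {x y z : X}
    (hg : g x y ≠ ⊥) (hf : f y z ≠ ⊥) : Qd.qcomp f g x z ≠ ⊥ :=
  ne_bot_of_le_ne_bot (hZDF.mul_ne_bot hg hf) (le_iSup (fun y => Qd.mul (g x y) (f y z)) y)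

section Subalg

variable {Qd} {A : Set (X → X → Q)} {f g : X → X → Q} {x : X}

theorem IsSubalg.mem_supp_qdag_iff (hZDF : Qd.ZDF) (hA : Qd.IsSubalg A) (hf : f ∈ A) :
    x ∈ supp (Qd.qdag f) ↔ x ∈ supp f := by
  have hnormal := hA.comp_comm f hf _ (hA.dag_mem f hf)
  constructor
  · rintro ⟨y, hy⟩
    refine Qd.mem_supp_of_mem_supp_qcomp (f := Qd.qdag f) ⟨x, ?_⟩
    rw [← hnormal]
    exact qcomp_ne_bot hZDF hy (Qd.qdag_ne_bot_iff.mp hy)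
  · rintro ⟨y, hy⟩
    refine Qd.mem_supp_of_mem_supp_qcomp (f := f) ⟨x, ?_⟩
    rw [hnormal]
    exact qcomp_ne_bot hZDF hy (Qd.qdag_ne_bot_iff.mpr hy)

theorem IsSubalg.mem_supp_qcomp_iff (hZDF : Qd.ZDF) (hA : Qd.IsSubalg A) (hf : f ∈ A)
    (hg : g ∈ A) : x ∈ supp (Qd.qcomp f g) ↔ x ∈ supp f ∧ x ∈ supp g := by
  refine ⟨fun h => ⟨Qd.mem_supp_of_mem_supp_qcomp (f := g) ?_,
    Qd.mem_supp_of_mem_supp_qcomp h⟩, ?_⟩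
  · rwa [← hA.comp_comm f hf g hg]
  rintro ⟨⟨a, ha⟩, ⟨b, hb⟩⟩
  have hgg : Qd.qcomp (Qd.qdag g) g x x ≠ ⊥ :=
    qcomp_ne_bot hZDF hb (Qd.qdag_ne_bot_iff.mpr hb)
  refine Qd.mem_supp_of_mem_supp_qcomp (f := Qd.qdag g) ⟨a, ?_⟩
  rw [← Qd.qcomp_assoc, ← hA.comp_comm f hf _ (hA.dag_mem g hg), Qd.qcomp_assoc]
  exact qcomp_ne_bot hZDF hgg ha

theorem IsSubalg.isTwoHom_mem_supp (hZDF : Qd.ZDF) (hNT : Qd.NontrivialQ)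
    (hA : Qd.IsSubalg A) (x : X) : Qd.IsTwoHom A (fun f => decide (x ∈ supp f)) where
  map_zero := by simp [supp, qzero]
  map_id := decide_eq_true ⟨x, by simp only [qid, if_pos]; exact hNT⟩
  map_sup _ _ _ _ := by simp only [mem_supp_sup_iff, Bool.decide_or]
  map_comp _ hf _ hg := by simp only [hA.mem_supp_qcomp_iff hZDF hf hg, Bool.decide_and]
  map_dag _ hf := by simp only [hA.mem_supp_qdag_iff hZDF hf]

theorem IsTwoHom.isChar_bang {γ : (X → X → Q) → Bool} (hγ : Qd.IsTwoHom A γ) :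
    Qd.IsChar A (Qd.bang ∘ γ) where
  map_zero := by simp [bang, hγ.map_zero]
  map_id := by simp [bang, hγ.map_id]
  map_sup f hf g hg := by
    cases hf' : γ f <;> cases hg' : γ g <;> simp [bang, hγ.map_sup f hf g hg, hf', hg']
  map_comp f hf g hg := by
    cases hf' : γ f <;> cases hg' : γ g <;>
      simp [bang, hγ.map_comp f hf g hg, hf', hg', Qd.one_mul, Qd.mul_bot, Qd.bot_mul]
  map_dag f hf := by
    cases hf' : γ f <;> simp [bang, hγ.map_dag f hf, hf', Qd.inv_one, Qd.inv_bot]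

end Subalg

/-- For a commutative nontrivial ZDF involutive quantale `Q` and a
nonempty set `X`, there exists a global section of the Gelfand spectrum over
`X`; i.e. the object `X` of `Rel_Q` is Kochen–Specker non-contextual. -/
theorem gelfand_global_section_exists
    (Qd : CommInvQuantale Q) (hZDF : Qd.ZDF) (hNT : Qd.NontrivialQ)
    (X : Type v) (hX : Nonempty X) :
    ∃ ρ : Set (X → X → Q) → (X → X → Q) → Q, Qd.IsGelfandGlobalSection ρ := by
  obtain ⟨x₀⟩ := hX
  exact ⟨fun _ f => Qd.bang (decide (x₀ ∈ supp f)),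
    fun _ hA => (hA.1.isTwoHom_mem_supp hZDF hNT x₀).isChar_bang,
    fun _ _ _ _ _ _ _ => rfl⟩

end CommInvQuantale
end
end

section
/- Let Q be a commutative nontrivial ZDF involutive quantale, X a set, and A a commutative von Neumann unital *-subsemialgebra of Hom(X,X). Then the primitive subunital idempotents of A are pairwise orthogonal (e∘e' = 0 for distinct primitive subunital idempotents e, e'), their join equals id_X, and every f ∈ A satisfies f = ⋁_e (f∘e) where e ranges over the primitive subunital idempotents of A; consequently A is completely decomposable as the direct product of the components e∘A. -/
open Classical

noncomputable section

universe u v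

namespace CommInvQuantale

variable {Q : Type u} [CompleteLattice Q] {X : Type v}

variable (Qd : CommInvQuantale Q)

section Decomp

variable {Q : Type u} [CompleteLattice Q] {X : Type v}

lemma my_mul_bot (Qd : CommInvQuantale Q) (a : Q) : Qd.mul a ⊥ = ⊥ := by
  have h := Qd.mul_sSup a ∅
  simpa using h

lemma my_bot_mul (Qd : CommInvQuantale Q) (a : Q) : Qd.mul ⊥ a = ⊥ := by
  rw [Qd.mul_comm]; exact my_mul_bot Qd a

lemma my_mul_one (Qd : CommInvQuantale Q) (a : Q) : Qd.mul a Qd.one = a := by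
  rw [Qd.mul_comm]; exact Qd.one_mul a

/-- Characteristic diagonal relation of a set. -/
def eS (Qd : CommInvQuantale Q) (S : Set X) : X → X → Q :=
  fun x y => if x = y ∧ x ∈ S then Qd.one else ⊥

lemma comp_eS (Qd : CommInvQuantale Q) (f : X → X → Q) (S : Set X) (x z : X) :
    Qd.qcomp f (eS Qd S) x z = if x ∈ S then f x z else ⊥ := by
  unfold qcomp
  by_cases hx : x ∈ S
  · rw [if_pos hx]
    apply le_antisymm
    · refine iSup_le fun y => ?_
      by_cases h : x = y ∧ x ∈ S
      · rw [show eS Qd S x y = Qd.one from if_pos h, Qd.one_mul, ← h.1]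
      · rw [show eS Qd S x y = ⊥ from if_neg h, my_bot_mul]
        exact bot_le
    · have h1 : Qd.mul (eS Qd S x x) (f x z) = f x z := by
        rw [show eS Qd S x x = Qd.one from if_pos ⟨rfl, hx⟩, Qd.one_mul]
      rw [← h1]
      exact le_iSup (fun y => Qd.mul (eS Qd S x y) (f y z)) x
  · rw [if_neg hx]
    refine le_antisymm (iSup_le fun y => ?_) bot_le
    have h : ¬(x = y ∧ x ∈ S) := fun h => hx h.2
    rw [show eS Qd S x y = ⊥ from if_neg h, my_bot_mul]

lemma eS_comp (Qd : CommInvQuantale Q) (f : X → X → Q) (S : Set X) (x z : X) :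
    Qd.qcomp (eS Qd S) f x z = if z ∈ S then f x z else ⊥ := by
  unfold qcomp
  by_cases hz : z ∈ S
  · rw [if_pos hz]
    apply le_antisymm
    · refine iSup_le fun y => ?_
      by_cases h : y = z ∧ y ∈ S
      · rw [show eS Qd S y z = Qd.one from if_pos h, my_mul_one, h.1]
      · rw [show eS Qd S y z = ⊥ from if_neg h, my_mul_bot]
        exact bot_le
    · have h1 : Qd.mul (f x z) (eS Qd S z z) = f x z := by
        rw [show eS Qd S z z = Qd.one from if_pos ⟨rfl, hz⟩, my_mul_one]
      rw [← h1]
      exact le_iSup (fun y => Qd.mul (f x y) (eS Qd S y z)) z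
  · rw [if_neg hz]
    refine le_antisymm (iSup_le fun y => ?_) bot_le
    have h : ¬(y = z ∧ y ∈ S) := fun h => hz (h.1 ▸ h.2)
    rw [show eS Qd S y z = ⊥ from if_neg h, my_mul_bot]

lemma eS_comp_eS (Qd : CommInvQuantale Q) (S T : Set X) :
    Qd.qcomp (eS Qd S) (eS Qd T) = eS Qd (S ∩ T) := by
  funext x z
  rw [comp_eS]
  by_cases hT : x ∈ T
  · rw [if_pos hT]
    unfold eS
    by_cases h : x = z ∧ x ∈ S
    · rw [if_pos h, if_pos ⟨h.1, h.2, hT⟩]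
    · rw [if_neg h, if_neg (fun h' => h ⟨h'.1, h'.2.1⟩)]
  · rw [if_neg hT]
    unfold eS
    rw [if_neg (fun h' => hT h'.2.2)]

lemma eS_sup (Qd : CommInvQuantale Q) (S T : Set X) :
    eS Qd S ⊔ eS Qd T = eS Qd (S ∪ T) := by
  funext x z
  show eS Qd S x z ⊔ eS Qd T x z = eS Qd (S ∪ T) x z
  unfold eS
  by_cases hxz : x = z
  · subst hxz
    by_cases hS : x ∈ S
    · by_cases hT : x ∈ T <;> simp [hS, hT]
    · by_cases hT : x ∈ T <;> simp [hS, hT]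
  · simp [hxz]

lemma eS_empty (Qd : CommInvQuantale Q) : eS Qd (∅ : Set X) = qzero := by
  funext x z
  simp [eS, qzero]

lemma eS_univ (Qd : CommInvQuantale Q) : eS Qd (Set.univ : Set X) = Qd.qid := by
  funext x z
  simp [eS, qid]

lemma eS_ne_zero (Qd : CommInvQuantale Q) (hNT : Qd.NontrivialQ) {S : Set X}
    (hS : S.Nonempty) : eS Qd S ≠ qzero := by
  obtain ⟨x, hx⟩ := hS
  intro h
  have := congrFun (congrFun h x) x
  rw [show eS Qd S x x = Qd.one from if_pos ⟨rfl, hx⟩] at this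
  exact hNT this

lemma eS_nonempty_of_ne_zero (Qd : CommInvQuantale Q) {S : Set X}
    (hS : eS Qd S ≠ qzero) : S.Nonempty := by
  by_contra h
  exact hS (by rw [Set.not_nonempty_iff_eq_empty.mp h, eS_empty])

lemma eS_inj (Qd : CommInvQuantale Q) (hNT : Qd.NontrivialQ) {S T : Set X}
    (h : eS Qd S = eS Qd T) : S = T := by
  ext x
  constructor <;> intro hx
  · have h1 := congrFun (congrFun h x) x
    rw [show eS Qd S x x = Qd.one from if_pos ⟨rfl, hx⟩] at h1
    by_contra hT
    rw [show eS Qd T x x = ⊥ from if_neg (fun h' => hT h'.2)] at h1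
    exact hNT h1
  · have h1 := congrFun (congrFun h x) x
    rw [show eS Qd T x x = Qd.one from if_pos ⟨rfl, hx⟩] at h1
    by_contra hS
    rw [show eS Qd S x x = ⊥ from if_neg (fun h' => hS h'.2)] at h1
    exact hNT h1.symm

lemma eS_subunital (Qd : CommInvQuantale Q) {A : Set (X → X → Q)} {S : Set X}
    (hS : eS Qd S ∈ A) (hSc : eS Qd Sᶜ ∈ A) : Qd.IsSubunital A (eS Qd S) := by
  refine ⟨⟨hS, by rw [eS_comp_eS, Set.inter_self]⟩, eS Qd Sᶜ,
    ⟨hSc, by rw [eS_comp_eS, Set.inter_self]⟩, ?_, ?_⟩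
  · rw [eS_comp_eS, Set.inter_compl_self, eS_empty]
  · rw [eS_sup, Set.union_compl_self, eS_univ]

/-- Every subunital idempotent is a characteristic diagonal relation with both
it and its complement in `A`. -/
lemma subunital_eq (Qd : CommInvQuantale Q) (hZDF : Qd.ZDF) {A : Set (X → X → Q)}
    {p : X → X → Q} (hp : Qd.IsSubunital A p) :
    ∃ S : Set X, eS Qd S ∈ A ∧ eS Qd Sᶜ ∈ A ∧ p = eS Qd S := by
  obtain ⟨⟨hpA, _⟩, q, ⟨hqA, _⟩, hpq, hsup⟩ := hp
  have hdiag : ∀ x : X, p x x ⊔ q x x = Qd.one := by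
    intro x
    have := congrFun (congrFun hsup x) x
    rwa [show Qd.qid x x = Qd.one from if_pos rfl] at this
  have hoff : ∀ x z : X, x ≠ z → p x z = ⊥ ∧ q x z = ⊥ := by
    intro x z hxz
    have := congrFun (congrFun hsup x) z
    rw [show Qd.qid x z = ⊥ from if_neg hxz] at this
    exact sup_eq_bot_iff.mp this
  have horth : ∀ x : X, p x x = ⊥ ∨ q x x = ⊥ := by
    intro x
    have h1 : Qd.qcomp p q x x = ⊥ := by rw [hpq]; rfl
    have h2 : Qd.mul (q x x) (p x x) ≤ ⊥ := by
      rw [← h1]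
      exact le_iSup (fun y => Qd.mul (q x y) (p y x)) x
    rcases hZDF _ _ (le_bot_iff.mp h2) with h | h
    · exact Or.inr h
    · exact Or.inl h
  refine ⟨{x | p x x ≠ ⊥}, ?_, ?_, ?_⟩
  · have : p = eS Qd {x | p x x ≠ ⊥} := by
      funext x z
      by_cases hxz : x = z
      · subst hxz
        by_cases hx : p x x = ⊥
        · rw [show eS Qd _ x x = ⊥ from if_neg (fun h => (show p x x ≠ ⊥ from h.2) hx), hx]
        · rw [show eS Qd {x | p x x ≠ ⊥} x x = Qd.one from if_pos ⟨rfl, hx⟩]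
          rcases horth x with h | h
          · exact absurd h hx
          · have := hdiag x
            rwa [h, sup_bot_eq] at this
      · rw [(hoff x z hxz).1, show eS Qd _ x z = ⊥ from if_neg (fun h => hxz h.1)]
    exact this ▸ hpA
  · have : q = eS Qd {x | p x x ≠ ⊥}ᶜ := by
      funext x z
      by_cases hxz : x = z
      · subst hxz
        by_cases hx : p x x = ⊥
        · rw [show eS Qd {x | p x x ≠ ⊥}ᶜ x x = Qd.one from
            if_pos ⟨rfl, fun h => h hx⟩]
          have := hdiag x
          rwa [hx, bot_sup_eq] at this
        · have hq : q x x = ⊥ := (horth x).resolve_left hx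
          rw [hq, show eS Qd {x | p x x ≠ ⊥}ᶜ x x = ⊥ from
            if_neg (fun h => h.2 hx)]
      · rw [(hoff x z hxz).2, show eS Qd _ x z = ⊥ from if_neg (fun h => hxz h.1)]
    exact this ▸ hqA
  · funext x z
    by_cases hxz : x = z
    · subst hxz
      by_cases hx : p x x = ⊥
      · rw [show eS Qd _ x x = ⊥ from if_neg (fun h => (show p x x ≠ ⊥ from h.2) hx), hx]
      · rw [show eS Qd {x | p x x ≠ ⊥} x x = Qd.one from if_pos ⟨rfl, hx⟩]
        rcases horth x with h | h
        · exact absurd h hx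
        · have := hdiag x
          rwa [h, sup_bot_eq] at this
    · rw [(hoff x z hxz).1, show eS Qd _ x z = ⊥ from if_neg (fun h => hxz h.1)]

/-- The class of `x` for the equivalence generated by the sets whose
characteristic diagonal relation lies in `A`. -/
def classOf (Qd : CommInvQuantale Q) (A : Set (X → X → Q)) (x : X) : Set X :=
  {z | ∀ S : Set X, eS Qd S ∈ A → (x ∈ S ↔ z ∈ S)}

lemma mem_classOf_self (Qd : CommInvQuantale Q) (A : Set (X → X → Q)) (x : X) :
    x ∈ classOf Qd A x := fun _ _ => Iff.rfl

lemma commutant_respects (Qd : CommInvQuantale Q) {A : Set (X → X → Q)}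
    {g : X → X → Q} (hg : g ∈ Qd.commutant A) {S : Set X} (hS : eS Qd S ∈ A)
    {x z : X} (h : g x z ≠ ⊥) : x ∈ S ↔ z ∈ S := by
  have hc := hg (eS Qd S) hS
  have h1 := congrFun (congrFun hc x) z
  rw [comp_eS, eS_comp] at h1
  constructor <;> intro hm
  · by_contra hz
    rw [if_pos hm, if_neg hz] at h1
    exact h h1
  · by_contra hx
    rw [if_neg hx, if_pos hm] at h1
    exact h h1.symm

lemma saturated_mem (Qd : CommInvQuantale Q) {A : Set (X → X → Q)}
    (hA : Qd.IsVN A) (T : Set X)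
    (hT : ∀ x z : X, z ∈ classOf Qd A x → (x ∈ T ↔ z ∈ T)) : eS Qd T ∈ A := by
  rw [← hA.2]
  intro g hg
  funext x z
  rw [eS_comp, comp_eS]
  by_cases hgz : g x z = ⊥
  · split_ifs <;> simp [hgz]
  · have hxz : z ∈ classOf Qd A x := fun S hS => commutant_respects Qd hg hS hgz
    have := hT x z hxz
    split_ifs with h1 h2 h2 <;> tauto

lemma classOf_mem (Qd : CommInvQuantale Q) {A : Set (X → X → Q)}
    (hA : Qd.IsVN A) (x : X) : eS Qd (classOf Qd A x) ∈ A := by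
  refine saturated_mem Qd hA _ fun y z hz => ?_
  constructor <;> intro hm S hS
  · exact (hm S hS).trans (hz S hS)
  · exact (hm S hS).trans (hz S hS).symm

lemma classOf_compl_mem (Qd : CommInvQuantale Q) {A : Set (X → X → Q)}
    (hA : Qd.IsVN A) (x : X) : eS Qd (classOf Qd A x)ᶜ ∈ A := by
  refine saturated_mem Qd hA _ fun y z hz => ?_
  have : y ∈ classOf Qd A x ↔ z ∈ classOf Qd A x := by
    constructor <;> intro hm S hS
    · exact (hm S hS).trans (hz S hS)
    · exact (hm S hS).trans (hz S hS).symm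
  exact not_iff_not.mpr this

lemma classOf_subunital (Qd : CommInvQuantale Q) {A : Set (X → X → Q)}
    (hA : Qd.IsVN A) (x : X) : Qd.IsSubunital A (eS Qd (classOf Qd A x)) :=
  eS_subunital Qd (classOf_mem Qd hA x) (classOf_compl_mem Qd hA x)

lemma classOf_subset (Qd : CommInvQuantale Q) {A : Set (X → X → Q)}
    {S : Set X} (hS : eS Qd S ∈ A) {x : X} (hx : x ∈ S) :
    classOf Qd A x ⊆ S := fun _ hz => (hz S hS).mp hx

/-- Characterization of primitive subunital idempotents: they are exactly the
characteristic relations of equivalence classes. -/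
lemma primitive_iff (Qd : CommInvQuantale Q) (hZDF : Qd.ZDF) (hNT : Qd.NontrivialQ)
    {A : Set (X → X → Q)} (hA : Qd.IsVN A) (p : X → X → Q) :
    Qd.IsPrimitive A p ↔ ∃ x : X, p = eS Qd (classOf Qd A x) := by
  constructor
  · rintro ⟨hsub, hne, hsplit⟩
    obtain ⟨S, hS, hSc, rfl⟩ := subunital_eq Qd hZDF hsub
    obtain ⟨x, hx⟩ := eS_nonempty_of_ne_zero Qd hne
    refine ⟨x, ?_⟩
    set C := classOf Qd A x with hC
    have hCS : C ⊆ S := classOf_subset Qd hS hx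
    by_cases heq : S ⊆ C
    · rw [Set.Subset.antisymm heq hCS]
    · exfalso
      obtain ⟨y, hyS, hyC⟩ := Set.not_subset.mp heq
      apply hsplit
      refine ⟨eS Qd C, eS Qd (S ∩ Cᶜ), classOf_subunital Qd hA x,
        eS_ne_zero Qd hNT ⟨x, mem_classOf_self Qd A x⟩, ?_, ?_, ?_, ?_⟩
      · apply eS_subunital Qd
        · rw [← eS_comp_eS]
          exact hA.1.comp_mem _ hS _ (classOf_compl_mem Qd hA x)
        · rw [Set.compl_inter, compl_compl, ← eS_sup]
          exact hA.1.sup_mem _ hSc _ (classOf_mem Qd hA x)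
      · exact eS_ne_zero Qd hNT ⟨y, hyS, hyC⟩
      · have hemp : C ∩ (S ∩ Cᶜ) = (∅ : Set X) :=
          Set.eq_empty_iff_forall_notMem.mpr fun z hz => hz.2.2 hz.1
        rw [eS_comp_eS, hemp, eS_empty]
      · have huni : C ∪ (S ∩ Cᶜ) = S := by
          ext z
          constructor
          · rintro (h | h)
            · exact hCS h
            · exact h.1
          · intro h
            by_cases hz : z ∈ C
            · exact Or.inl hz
            · exact Or.inr ⟨h, hz⟩
        rw [eS_sup, huni]
  · rintro ⟨x, rfl⟩
    refine ⟨classOf_subunital Qd hA x,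
      eS_ne_zero Qd hNT ⟨x, mem_classOf_self Qd A x⟩, ?_⟩
    rintro ⟨s, t, hs, hsne, ht, htne, hst, hsum⟩
    obtain ⟨S₁, hS₁, _, rfl⟩ := subunital_eq Qd hZDF hs
    obtain ⟨S₂, hS₂, _, rfl⟩ := subunital_eq Qd hZDF ht
    obtain ⟨y₁, hy₁⟩ := eS_nonempty_of_ne_zero Qd hsne
    obtain ⟨y₂, hy₂⟩ := eS_nonempty_of_ne_zero Qd htne
    rw [eS_comp_eS, ← eS_empty Qd] at hst
    have hdisj : S₁ ∩ S₂ = (∅ : Set X) := eS_inj Qd hNT hst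
    rw [eS_sup] at hsum
    have hunion : S₁ ∪ S₂ = classOf Qd A x := eS_inj Qd hNT hsum
    have hy₁C : y₁ ∈ classOf Qd A x := hunion ▸ Set.mem_union_left _ hy₁
    have hy₂C : y₂ ∈ classOf Qd A x := hunion ▸ Set.mem_union_right _ hy₂
    have h1 : x ∈ S₁ := (hy₁C S₁ hS₁).mpr hy₁
    have h2 : y₂ ∈ S₁ := (hy₁C S₁ hS₁ |>.symm.trans (hy₂C S₁ hS₁)).mp hy₁
    have : y₂ ∈ S₁ ∩ S₂ := ⟨h2, hy₂⟩
    rw [hdisj] at this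
    exact this

lemma classOf_eq_of_mem (Qd : CommInvQuantale Q) {A : Set (X → X → Q)}
    {x x' z : X} (h : z ∈ classOf Qd A x) (h' : z ∈ classOf Qd A x') :
    classOf Qd A x = classOf Qd A x' := by
  ext w
  constructor <;> intro hw S hS
  · exact ((h' S hS).trans (h S hS).symm).trans (hw S hS)
  · exact ((h S hS).trans (h' S hS).symm).trans (hw S hS)

end Decomp

/-- The primitive subunital idempotents of `A` are pairwise
orthogonal, their join is the identity relation, and every `f ∈ A` is the join
of the `f∘e`; hence `A` is completely decomposable. -/
theorem completely_decomposable
    (Qd : CommInvQuantale Q) (hZDF : Qd.ZDF) (hNT : Qd.NontrivialQ)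
    (X : Type v) (A : Set (X → X → Q)) (hA : Qd.IsVN A) :
    (∀ e e' : X → X → Q, Qd.IsPrimitive A e → Qd.IsPrimitive A e' → e ≠ e' →
        Qd.qcomp e e' = qzero) ∧
    sSup {e : X → X → Q | Qd.IsPrimitive A e} = Qd.qid ∧
    (∀ f ∈ A, f = ⨆ e ∈ {p : X → X → Q | Qd.IsPrimitive A p}, Qd.qcomp f e) := by
  refine ⟨?_, ?_, ?_⟩
  · intro e e' he he' hne
    obtain ⟨x, rfl⟩ := (primitive_iff Qd hZDF hNT hA e).mp he
    obtain ⟨x', rfl⟩ := (primitive_iff Qd hZDF hNT hA e').mp he'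
    rw [eS_comp_eS]
    have hdisj : classOf Qd A x ∩ classOf Qd A x' = ∅ := by
      by_contra h
      obtain ⟨z, hz, hz'⟩ := Set.nonempty_iff_ne_empty.mpr h
      exact hne (by rw [classOf_eq_of_mem Qd hz hz'])
    rw [hdisj, eS_empty]
  · apply le_antisymm
    · refine sSup_le fun e he => ?_
      obtain ⟨x, rfl⟩ := (primitive_iff Qd hZDF hNT hA e).mp he
      rw [Pi.le_def]; intro a; rw [Pi.le_def]; intro b
      by_cases h : a = b ∧ a ∈ classOf Qd A x
      · rw [show eS Qd (classOf Qd A x) a b = Qd.one from if_pos h,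
          show Qd.qid a b = Qd.one from if_pos h.1]
      · rw [show eS Qd (classOf Qd A x) a b = ⊥ from if_neg h]
        exact bot_le
    · rw [Pi.le_def]; intro a; rw [Pi.le_def]; intro b
      by_cases hab : a = b
      · subst hab
        have hmem : eS Qd (classOf Qd A a) ∈ {e : X → X → Q | Qd.IsPrimitive A e} :=
          (primitive_iff Qd hZDF hNT hA _).mpr ⟨a, rfl⟩
        have hle := le_sSup hmem
        calc Qd.qid a a = Qd.one := if_pos rfl
          _ = eS Qd (classOf Qd A a) a a := (if_pos ⟨rfl, mem_classOf_self Qd A a⟩).symm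
          _ ≤ sSup {e : X → X → Q | Qd.IsPrimitive A e} a a :=
            Pi.le_def.mp (Pi.le_def.mp hle a) a
      · rw [show Qd.qid a b = ⊥ from if_neg hab]
        exact bot_le
  · intro f hf
    apply le_antisymm
    · rw [Pi.le_def]; intro a; rw [Pi.le_def]; intro b
      have hmem : eS Qd (classOf Qd A a) ∈ {p : X → X → Q | Qd.IsPrimitive A p} :=
        (primitive_iff Qd hZDF hNT hA _).mpr ⟨a, rfl⟩
      have h2 : Qd.qcomp f (eS Qd (classOf Qd A a)) ≤
          ⨆ e ∈ {p : X → X → Q | Qd.IsPrimitive A p}, Qd.qcomp f e :=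
        le_iSup₂ (f := fun e _ => Qd.qcomp f e) (eS Qd (classOf Qd A a)) hmem
      calc f a b = Qd.qcomp f (eS Qd (classOf Qd A a)) a b := by
            rw [comp_eS, if_pos (mem_classOf_self Qd A a)]
        _ ≤ _ := Pi.le_def.mp (Pi.le_def.mp h2 a) b
    · refine iSup₂_le fun e he => ?_
      obtain ⟨x, rfl⟩ := (primitive_iff Qd hZDF hNT hA e).mp he
      rw [Pi.le_def]; intro a; rw [Pi.le_def]; intro b
      rw [comp_eS]
      split_ifs
      · exact le_rfl
      · exact bot_le

end CommInvQuantale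
end
end

section
/- Let Q be a commutative nontrivial ZDF involutive quantale, X a set, and A a commutative von Neumann unital *-subsemialgebra of Hom(X,X). A subset J ⊆ A is a prime k*-ideal of A if and only if J is the kernel of some homomorphism γ : A → 2. -/
open Classical

noncomputable section

universe u v

namespace CommInvQuantale

variable {Q : Type u} [CompleteLattice Q] {X : Type v}

variable (Qd : CommInvQuantale Q)

/-- A subset `J ⊆ A` is a prime k*-ideal of `A` iff it is the
kernel of some homomorphism `γ : A → 2`. -/
theorem prime_kstar_ideal_iff_kernel_of_two_hom
    (Qd : CommInvQuantale Q) (hZDF : Qd.ZDF) (hNT : Qd.NontrivialQ)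
    (X : Type v) (A : Set (X → X → Q)) (hA : Qd.IsVN A)
    (J : Set (X → X → Q)) (hJ : J ⊆ A) :
    Qd.IsPrimeKStarIdeal A J ↔
      ∃ γ : (X → X → Q) → Bool, Qd.IsTwoHom A γ ∧ J = kerTwo A γ := by
  have mul_bot : ∀ a : Q, Qd.mul a ⊥ = ⊥ := by
    intro a
    have := Qd.mul_sSup a ∅
    simpa using this
  have comp_id : ∀ f : X → X → Q, Qd.qcomp f Qd.qid = f := by
    intro f
    funext x z
    unfold qcomp qid
    apply le_antisymm
    · apply iSup_le
      intro y
      by_cases h : x = y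
      · subst h; simp [Qd.one_mul]
      · simp [h, Qd.mul_comm, mul_bot]
    · have : Qd.mul (if x = x then Qd.one else ⊥) (f x z) = f x z := by
        simp [Qd.one_mul]
      calc f x z = Qd.mul (if x = x then Qd.one else ⊥) (f x z) := this.symm
        _ ≤ ⨆ y, Qd.mul (if x = y then Qd.one else ⊥) (f y z) :=
          le_iSup (fun y => Qd.mul (if x = y then Qd.one else ⊥) (f y z)) x
  have dag_dag : ∀ f : X → X → Q, Qd.qdag (Qd.qdag f) = f := by
    intro f; funext x y; simp [qdag, Qd.inv_inv]
  constructor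
  · intro hPJ
    refine ⟨fun f => if f ∈ J then false else true, ?_, ?_⟩
    · have hid_not : Qd.qid ∉ J := by
        intro hid
        apply hPJ.proper
        apply Set.Subset.antisymm hPJ.ideal.subset
        intro f hf
        have := hPJ.ideal.absorb f hf Qd.qid hid
        rwa [comp_id f] at this
      constructor
      · simp [hPJ.ideal.zero_mem]
      · simp [hid_not]
      · intro f hf g hg
        by_cases hfJ : f ∈ J <;> by_cases hgJ : g ∈ J
        · simp [hfJ, hgJ, hPJ.ideal.sup_mem f hfJ g hgJ]
        · have : f ⊔ g ∉ J := by
            intro h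
            exact hgJ (hPJ.kideal f hfJ g hg h)
          simp [hfJ, hgJ, this]
        · have : f ⊔ g ∉ J := by
            intro h
            have h' : g ⊔ f ∈ J := by rwa [sup_comm] at h
            exact hfJ (hPJ.kideal g hgJ f hf h')
          simp [hfJ, hgJ, this]
        · have : f ⊔ g ∉ J := by
            intro h
            have hfg : (f ⊔ g) ⊔ f = f ⊔ g := by
              rw [sup_comm f g, sup_assoc, sup_idem, sup_comm]
            have := hPJ.kideal (f ⊔ g) h f hf (by rwa [hfg])
            exact hfJ this
          simp [hfJ, hgJ, this]
      · intro f hf g hg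
        by_cases hfJ : f ∈ J
        · have : Qd.qcomp f g ∈ J := by
            rw [hA.1.comp_comm f hf g hg]
            exact hPJ.ideal.absorb g hg f hfJ
          simp [hfJ, this]
        · by_cases hgJ : g ∈ J
          · have : Qd.qcomp f g ∈ J := hPJ.ideal.absorb f hf g hgJ
            simp [hfJ, hgJ, this]
          · have : Qd.qcomp f g ∉ J := by
              intro h
              rcases hPJ.prime f hf g hg h with h' | h'
              exacts [hfJ h', hgJ h']
            simp [hfJ, hgJ, this]
      · intro f hf
        by_cases hfJ : f ∈ J
        · simp [hfJ, hPJ.dag_mem f hfJ]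
        · have : Qd.qdag f ∉ J := by
            intro h
            have := hPJ.dag_mem _ h
            rw [dag_dag] at this
            exact hfJ this
          simp [hfJ, this]
    · ext f
      simp only [kerTwo, Set.mem_setOf_eq, Set.mem_sep_iff]
      constructor
      · intro hf
        exact ⟨hJ hf, by simp [hf]⟩
      · rintro ⟨hfA, h⟩
        by_contra hfJ
        simp [hfJ] at h
  · rintro ⟨γ, hγ, rfl⟩
    have memker : ∀ f, f ∈ kerTwo A γ ↔ f ∈ A ∧ γ f = false := fun f => Iff.rfl
    refine ⟨⟨?_, ?_, ?_, ?_⟩, ?_, ?_, ?_, ?_⟩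
    · intro f hf; exact hf.1
    · exact ⟨hA.1.zero_mem, hγ.map_zero⟩
    · intro a ha b hb
      refine ⟨hA.1.sup_mem a ha.1 b hb.1, ?_⟩
      rw [hγ.map_sup a ha.1 b hb.1, ha.2, hb.2]; rfl
    · intro f hf a ha
      refine ⟨hA.1.comp_mem f hf a ha.1, ?_⟩
      rw [hγ.map_comp f hf a ha.1, ha.2, Bool.and_false]
    · intro hEq
      have h : Qd.qid ∈ kerTwo A γ := by rw [hEq]; exact hA.1.id_mem
      have := h.2
      rw [hγ.map_id] at this
      exact Bool.noConfusion this
    · intro f hf g hg h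
      have := h.2
      rw [hγ.map_comp f hf g hg] at this
      rcases Bool.and_eq_false_iff.mp this with h' | h'
      · exact Or.inl ⟨hf, h'⟩
      · exact Or.inr ⟨hg, h'⟩
    · intro a ha b hb h
      have := h.2
      rw [hγ.map_sup a ha.1 b hb, ha.2, Bool.false_or] at this
      exact ⟨hb, this⟩
    · intro a ha
      refine ⟨hA.1.dag_mem a ha.1, ?_⟩
      rw [hγ.map_dag a ha.1, ha.2]

end CommInvQuantale
end
end

section
/- Let Q be a commutative nontrivial ZDF involutive quantale, X a set, and f a Q-relation on X satisfying f∘f† = f†∘f. Then supp(f) = cosupp(f). -/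
open Classical

noncomputable section

universe u v

namespace CommInvQuantale

variable {Q : Type u} [CompleteLattice Q] {X : Type v}

variable (Qd : CommInvQuantale Q)

/-- If a `Q`-relation `f` on `X` satisfies `f∘f† = f†∘f` then
`supp(f) = cosupp(f)`. -/
theorem supp_eq_cosupp_of_normal
    (Qd : CommInvQuantale Q) (hZDF : Qd.ZDF) (hNT : Qd.NontrivialQ)
    (X : Type v) (f : X → X → Q)
    (hf : Qd.qcomp f (Qd.qdag f) = Qd.qcomp (Qd.qdag f) f) :
    supp f = cosupp f := by
  have hinvbot : Qd.inv ⊥ = ⊥ := by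
    have := Qd.inv_sSup ∅
    simpa using this
  have hmulbot : ∀ a : Q, Qd.mul a ⊥ = ⊥ := by
    intro a
    have := Qd.mul_sSup a ∅
    simpa using this
  have key : ∀ a : Q, (Qd.mul a (Qd.inv a) = ⊥ ↔ a = ⊥) := by
    intro a
    constructor
    · intro h
      rcases hZDF _ _ h with h | h
      · exact h
      · rw [← Qd.inv_inv a, h, hinvbot]
    · intro h; rw [h, Qd.mul_comm, hmulbot]
  have key' : ∀ a : Q, (Qd.mul (Qd.inv a) a = ⊥ ↔ a = ⊥) := by
    intro a; rw [Qd.mul_comm]; exact key a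
  have hxx : ∀ x : X,
      (⨆ y : X, Qd.mul (Qd.inv (f y x)) (f y x)) =
      (⨆ y : X, Qd.mul (f x y) (Qd.inv (f x y))) := by
    intro x
    have := congrFun (congrFun hf x) x
    simpa [qcomp, qdag] using this
  ext x
  simp only [supp, cosupp, Set.mem_setOf_eq]
  constructor
  · rintro ⟨y, hy⟩
    by_contra hc
    push_neg at hc
    have hL : (⨆ y : X, Qd.mul (Qd.inv (f y x)) (f y x)) = ⊥ := by
      apply iSup_eq_bot.2
      intro z
      rw [key']
      exact hc z
    rw [hxx x] at hL
    have := iSup_eq_bot.1 hL y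
    exact hy ((key _).1 this)
  · rintro ⟨y, hy⟩
    by_contra hc
    push_neg at hc
    have hR : (⨆ y : X, Qd.mul (f x y) (Qd.inv (f x y))) = ⊥ := by
      apply iSup_eq_bot.2
      intro z
      rw [key]
      exact hc z
    rw [← hxx x] at hR
    have := iSup_eq_bot.1 hR y
    exact hy ((key' _).1 this)

end CommInvQuantale
end
end

section
/- Let Q be a commutative nontrivial ZDF involutive quantale, X a set, and A a commutative unital *-subsemialgebra of Hom(X,X). Then: (i) for every character ρ of A, the composite w∘ρ is a homomorphism A → 2 and ker(w∘ρ) = ker ρ; (ii) for every homomorphism γ : A → 2, the composite !∘γ is a character of A; and (iii) w∘(!∘γ) = γ. (Here w : Q → 2 sends 0 to 0 and every nonzero element to 1, and ! : 2 → Q sends 0 to 0 and 1 to 1.) -/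
open Classical

noncomputable section

universe u v

namespace CommInvQuantale

variable {Q : Type u} [CompleteLattice Q] {X : Type v}

variable (Qd : CommInvQuantale Q)

/-- (i) for every character `ρ` of `A`, `w∘ρ` is a homomorphism
`A → 2` with the same kernel as `ρ`; (ii) for every homomorphism `γ : A → 2`,
`!∘γ` is a character of `A`; (iii) `w∘(!∘γ) = γ`. -/
theorem characters_and_two_homs
    (Qd : CommInvQuantale Q) (hZDF : Qd.ZDF) (hNT : Qd.NontrivialQ)
    (X : Type v) (A : Set (X → X → Q)) (hA : Qd.IsSubalg A) :
    (∀ ρ : (X → X → Q) → Q, Qd.IsChar A ρ →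
        Qd.IsTwoHom A (fun f => wmap (ρ f)) ∧
        kerTwo A (fun f => wmap (ρ f)) = kerChar A ρ) ∧
    (∀ γ : (X → X → Q) → Bool, Qd.IsTwoHom A γ →
        Qd.IsChar A (fun f => Qd.bang (γ f))) ∧
    (∀ γ : (X → X → Q) → Bool, Qd.IsTwoHom A γ →
        (fun f => wmap (Qd.bang (γ f))) = γ) := by
  have mul_bot : ∀ a : Q, Qd.mul a ⊥ = ⊥ := by
    intro a
    have := Qd.mul_sSup a ∅
    simpa using this
  have inv_bot : Qd.inv (⊥ : Q) = ⊥ := by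
    have := Qd.inv_sSup ∅
    simpa using this
  refine ⟨?_, ?_, ?_⟩
  · intro ρ hρ
    constructor
    · constructor
      · simp [wmap, hρ.map_zero]
      · simp only [wmap, hρ.map_id, if_neg hNT]
      · intro f hf g hg
        rw [hρ.map_sup f hf g hg]
        simp only [wmap]
        by_cases h1 : ρ f = ⊥ <;> by_cases h2 : ρ g = ⊥ <;>
          simp [h1, h2, sup_eq_bot_iff]
      · intro f hf g hg
        rw [hρ.map_comp f hf g hg]
        simp only [wmap]
        by_cases h1 : ρ f = ⊥
        · simp [h1, Qd.mul_comm, mul_bot]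
        · by_cases h2 : ρ g = ⊥
          · simp [h1, h2, mul_bot]
          · have hne : Qd.mul (ρ f) (ρ g) ≠ ⊥ := by
              intro h; rcases hZDF _ _ h with h | h
              · exact h1 h
              · exact h2 h
            simp [h1, h2, hne]
      · intro f hf
        rw [hρ.map_dag f hf]
        simp only [wmap]
        by_cases h1 : ρ f = ⊥
        · simp [h1, inv_bot]
        · have hne : Qd.inv (ρ f) ≠ ⊥ := by
            intro h
            apply h1
            have := congrArg Qd.inv h
            rwa [Qd.inv_inv, inv_bot] at this
          simp [h1, hne]
    · ext f
      simp only [kerTwo, kerChar, Set.mem_setOf_eq, wmap]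
      by_cases h1 : ρ f = ⊥ <;> simp [h1]
  · intro γ hγ
    constructor
    · simp [bang, hγ.map_zero]
    · simp [bang, hγ.map_id]
    · intro f hf g hg
      rw [hγ.map_sup f hf g hg]
      cases γ f <;> cases γ g <;> simp [bang]
    · intro f hf g hg
      rw [hγ.map_comp f hf g hg]
      cases h1 : γ f <;> cases h2 : γ g <;>
        simp [bang, mul_bot, Qd.mul_comm, Qd.one_mul]
    · intro f hf
      rw [hγ.map_dag f hf]
      cases γ f <;> simp [bang, inv_bot, Qd.inv_one]
  · intro γ hγ
    funext f
    cases h : γ f <;> simp [bang, wmap, h, if_neg hNT]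

end CommInvQuantale
end
end
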